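/- arXiv:1601.03175 — 5 statements merged into one kernel-verified Lean document; each statement's English description precedes it below -/
import Mathlib

section
/- Let T be a bounded linear operator on an infinite-dimensional complex Banach space. T satisfies property (Z_{E_a}) if and only if T satisfies Weyl's theorem (σ(T)\σ_W(T) = E^0(T)) and E^0(T) = E_a(T). -/
open Set

noncomputable section

namespace ZProps

variable {X : Type*} [NormedAddCommGroup X] [NormedSpace ℂ X] [CompleteSpace X]

/-- The spectrum of `T`. -/
def sp (T : X →L[ℂ] X) : Set ℂ := spectrum ℂ T

/-- The approximate point spectrum: `λ` such that `T - λ` is not bounded below. -/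
def spa (T : X →L[ℂ] X) : Set ℂ :=
  {l | ¬ ∃ c > (0:ℝ), ∀ x : X, c * ‖x‖ ≤ ‖(T - l • 1) x‖}

/-- The point spectrum (eigenvalues). -/
def spp (T : X →L[ℂ] X) : Set ℂ := {l | ∃ x : X, x ≠ 0 ∧ T x = l • x}

/-- Eigenvalues of finite multiplicity. -/
def spp0 (T : X →L[ℂ] X) : Set ℂ :=
  {l | l ∈ spp T ∧ FiniteDimensional ℂ (LinearMap.ker ((T - l • 1 : X →L[ℂ] X) : X →ₗ[ℂ] X))}

/-- Isolated points of a subset of `ℂ`. -/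
def iso (A : Set ℂ) : Set ℂ :=
  {l | l ∈ A ∧ ∃ ε > (0:ℝ), ∀ μ ∈ A, μ ≠ l → ε ≤ ‖μ - l‖}

def Ea (T : X →L[ℂ] X) : Set ℂ := iso (spa T) ∩ spp T
def Ea0 (T : X →L[ℂ] X) : Set ℂ := iso (spa T) ∩ spp0 T
def Efull (T : X →L[ℂ] X) : Set ℂ := iso (sp T) ∩ spp T
def E0 (T : X →L[ℂ] X) : Set ℂ := iso (sp T) ∩ spp0 T

/-- Fredholm operator: finite-dimensional kernel, closed range of finite codimension. -/
def IsFredholmOp (S : X →L[ℂ] X) : Prop :=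
  FiniteDimensional ℂ (LinearMap.ker (S : X →ₗ[ℂ] X)) ∧
  FiniteDimensional ℂ (X ⧸ LinearMap.range (S : X →ₗ[ℂ] X)) ∧
  IsClosed ((LinearMap.range (S : X →ₗ[ℂ] X) : Submodule ℂ X) : Set X)

/-- Weyl operator: Fredholm of index 0. -/
def IsWeylOp (S : X →L[ℂ] X) : Prop :=
  IsFredholmOp S ∧
  Module.finrank ℂ (LinearMap.ker (S : X →ₗ[ℂ] X)) = Module.finrank ℂ (X ⧸ LinearMap.range (S : X →ₗ[ℂ] X))

/-- Weyl spectrum. -/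
def spW (T : X →L[ℂ] X) : Set ℂ := {l | ¬ IsWeylOp (T - l • 1)}

def HasFiniteAscent (S : X →L[ℂ] X) : Prop :=
  ∃ n : ℕ, LinearMap.ker ((S ^ n : X →L[ℂ] X) : X →ₗ[ℂ] X) = LinearMap.ker ((S ^ (n + 1) : X →L[ℂ] X) : X →ₗ[ℂ] X)

def HasFiniteDescent (S : X →L[ℂ] X) : Prop :=
  ∃ n : ℕ, LinearMap.range ((S ^ n : X →L[ℂ] X) : X →ₗ[ℂ] X) = LinearMap.range ((S ^ (n + 1) : X →L[ℂ] X) : X →ₗ[ℂ] X)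

/-- Ascent of an operator (junk value if infinite). -/
def ascent (S : X →L[ℂ] X) : ℕ :=
  sInf {n : ℕ | LinearMap.ker ((S ^ n : X →L[ℂ] X) : X →ₗ[ℂ] X) = LinearMap.ker ((S ^ (n + 1) : X →L[ℂ] X) : X →ₗ[ℂ] X)}

/-- Poles of the resolvent: spectral points where `T - λ` has finite ascent and descent. -/
def poles (T : X →L[ℂ] X) : Set ℂ :=
  {l | l ∈ sp T ∧ HasFiniteAscent (T - l • 1) ∧ HasFiniteDescent (T - l • 1)}

/-- Poles of finite rank. -/
def poles0 (T : X →L[ℂ] X) : Set ℂ :=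
  {l | l ∈ poles T ∧ FiniteDimensional ℂ (LinearMap.ker ((T - l • 1 : X →L[ℂ] X) : X →ₗ[ℂ] X))}

/-- Left poles: `λ ∈ σ_a(T)` with finite ascent `a = a(T-λ)` and `R((T-λ)^(a+1))` closed. -/
def leftPoles (T : X →L[ℂ] X) : Set ℂ :=
  {l | l ∈ spa T ∧ HasFiniteAscent (T - l • 1) ∧
    IsClosed ((LinearMap.range (((T - l • 1) ^ (ascent (T - l • 1) + 1) : X →L[ℂ] X) : X →ₗ[ℂ] X) : Submodule ℂ X) : Set X)}

/-- Left poles of finite rank. -/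
def leftPoles0 (T : X →L[ℂ] X) : Set ℂ :=
  {l | l ∈ leftPoles T ∧ FiniteDimensional ℂ (LinearMap.ker ((T - l • 1 : X →L[ℂ] X) : X →ₗ[ℂ] X))}

/-- A linear endomorphism of a normed space is Weyl (Fredholm of index 0). -/
def LMIsWeyl {V : Type*} [NormedAddCommGroup V] [Module ℂ V] (L : V →ₗ[ℂ] V) : Prop :=
  FiniteDimensional ℂ (LinearMap.ker L) ∧
  FiniteDimensional ℂ (V ⧸ LinearMap.range L) ∧
  IsClosed ((LinearMap.range L : Submodule ℂ V) : Set V) ∧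
  Module.finrank ℂ (LinearMap.ker L) = Module.finrank ℂ (V ⧸ LinearMap.range L)

lemma mapsTo_range_pow (S : X →L[ℂ] X) (n : ℕ) :
    ∀ x ∈ LinearMap.range ((S ^ n : X →L[ℂ] X) : X →ₗ[ℂ] X),
      S x ∈ LinearMap.range ((S ^ n : X →L[ℂ] X) : X →ₗ[ℂ] X) := by
  rintro x ⟨y, rfl⟩
  exact ⟨S y, by
    have h : (S ^ n) * S = S * (S ^ n) := (Commute.refl S).pow_left n
    calc (S ^ n) (S y) = ((S ^ n) * S) y := rfl
    _ = (S * S ^ n) y := by rw [h]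
    _ = S ((S ^ n) y) := rfl⟩

/-- B-Weyl operator: for some `n`, `R(S^n)` is closed and the restriction of `S` to
`R(S^n)` is a Weyl operator. -/
def IsBWeylOp (S : X →L[ℂ] X) : Prop :=
  ∃ n : ℕ, IsClosed ((LinearMap.range ((S ^ n : X →L[ℂ] X) : X →ₗ[ℂ] X) : Submodule ℂ X) : Set X) ∧
    LMIsWeyl ((S : X →ₗ[ℂ] X).restrict (mapsTo_range_pow S n))

/-- B-Weyl spectrum. -/
def spBW (T : X →L[ℂ] X) : Set ℂ := {l | ¬ IsBWeylOp (T - l • 1)}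

/-- Single-valued extension property at a point. -/
def HasSVEPAt (T : X →L[ℂ] X) (l : ℂ) : Prop :=
  ∀ U : Set ℂ, IsOpen U → l ∈ U → ∀ f : ℂ → X, AnalyticOnNhd ℂ f U →
    (∀ μ ∈ U, (T - μ • 1) (f μ) = 0) → ∀ μ ∈ U, f μ = 0

/-- Riesz operator: `R - μ` is Fredholm for every nonzero `μ`. -/
def IsRieszOp (R : X →L[ℂ] X) : Prop :=
  ∀ μ : ℂ, μ ≠ 0 → IsFredholmOp (R - μ • 1)

/-- Property `(Z_{E_a})`. -/
def PropZEa (T : X →L[ℂ] X) : Prop := sp T \ spW T = Ea T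

/-- Property `(Z_{Π_a})`. -/
def PropZPa (T : X →L[ℂ] X) : Prop := sp T \ spW T = leftPoles T

/-- Weyl's theorem. -/
def WeylThm (T : X →L[ℂ] X) : Prop := sp T \ spW T = E0 T

/-- Browder's theorem. -/
def BrowderThm (T : X →L[ℂ] X) : Prop := sp T \ spW T = poles0 T

/-- Property `(k)`. -/
def PropK (T : X →L[ℂ] X) : Prop := sp T \ spW T = Efull T

/-- Property `(gaw)`. -/
def PropGaw (T : X →L[ℂ] X) : Prop := sp T \ spBW T = Ea T

/-- Property `(aw)`. -/
def PropAw (T : X →L[ℂ] X) : Prop := sp T \ spW T = Ea0 T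

/-- Property `(Baw)`. -/
def PropBaw (T : X →L[ℂ] X) : Prop := sp T \ spBW T = Ea0 T

/-- Property `(gab)`. -/
def PropGab (T : X →L[ℂ] X) : Prop := sp T \ spBW T = leftPoles T

/-- Property `(ab)`. -/
def PropAb (T : X →L[ℂ] X) : Prop := sp T \ spW T = leftPoles0 T

end ZProps

end

/-! A Weyl operator is an invertible operator plus a compact one, so by the Fredholm alternative,
near a point `λ ∉ σ_W(T)` injectivity of `T - μ` already forces invertibility. Hence a point of
`σ(T) \ σ_W(T)` isolated in `σ_a(T)` is isolated in `σ(T)`: under `(Z_{E_a})` this gives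
`E_a(T) ⊆ E^0(T)`, while `E^0(T) ⊆ E_a(T)` holds for every operator because
`σ_p(T) ⊆ σ_a(T) ⊆ σ(T)`. -/

namespace ZProps

open Filter Topology

variable {X : Type*} [NormedAddCommGroup X] [NormedSpace ℂ X]

lemma mem_sp_iff_not_isUnit (T : X →L[ℂ] X) (l : ℂ) :
    l ∈ sp T ↔ ¬ IsUnit (T - l • 1) := by
  rw [sp, spectrum.mem_iff, Algebra.algebraMap_eq_smul_one, ← neg_sub, IsUnit.neg_iff]

lemma notMem_spa_iff (T : X →L[ℂ] X) (l : ℂ) :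
    l ∉ spa T ↔ ∃ K, AntilipschitzWith K (T - l • 1 : X →L[ℂ] X) := by
  rw [spa, mem_ofPred_eq, not_not, antilipschitzWith_iff_exists_mul_le_norm]

lemma spa_subset_sp (T : X →L[ℂ] X) : spa T ⊆ sp T := by
  intro l hl
  rw [mem_sp_iff_not_isUnit]
  rintro ⟨u, hu⟩
  exact (notMem_spa_iff T l).2
    ⟨_, by rw [← hu]; exact (ContinuousLinearEquiv.ofUnit u).antilipschitz⟩ hl

lemma spp_subset_spa (T : X →L[ℂ] X) : spp T ⊆ spa T := by
  rintro l ⟨x, hx, hTx⟩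
  by_contra hl
  obtain ⟨K, hK⟩ := (notMem_spa_iff T l).1 hl
  exact hx (hK.injective (by simp [hTx]))

lemma injective_sub_smul_of_notMem_spa {T : X →L[ℂ] X} {l : ℂ} (hl : l ∉ spa T) :
    Function.Injective (T - l • 1 : X →L[ℂ] X) :=
  ((notMem_spa_iff T l).1 hl).choose_spec.injective

lemma mem_iso_iff {A : Set ℂ} {l : ℂ} :
    l ∈ iso A ↔ l ∈ A ∧ ∀ᶠ μ in 𝓝[≠] l, μ ∉ A := by
  rw [iso, mem_ofPred_eq, eventually_nhdsWithin_iff, Metric.eventually_nhds_iff]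
  refine and_congr_right fun _ => exists_congr fun ε => and_congr_right fun _ => ?_
  simp only [dist_eq_norm, mem_compl_iff, mem_singleton_iff]
  exact ⟨fun h μ hμ hne hA => (h μ hA hne).not_gt hμ,
    fun h μ hA hne => not_lt.1 fun hμ => h hμ hne hA⟩

lemma mem_iso_of_subset {A B : Set ℂ} {l : ℂ} (hAB : A ⊆ B) (hl : l ∈ A)
    (hB : l ∈ iso B) : l ∈ iso A := by
  rw [mem_iso_iff] at hB ⊢
  exact ⟨hl, hB.2.mono fun _ hμ hμA => hμ (hAB hμA)⟩

lemma isUnit_of_injective_of_isUnit_add [CompleteSpace X] {S K : X →L[ℂ] X}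
    (hK : IsCompactOperator K) (hSK : IsUnit (S + K)) (hS : Function.Injective S) :
    IsUnit S := by
  obtain ⟨V, hV⟩ := hSK
  set F : X →L[ℂ] X := ↑V⁻¹ * K
  have hF : IsCompactOperator F := hK.clm_comp (↑V⁻¹ : X →L[ℂ] X)
  have hS_eq : S = V * (1 - F) := by
    rw [mul_sub, mul_one, ← mul_assoc, Units.mul_inv, one_mul, hV, add_sub_cancel_right]
  have hF1 : ¬ Module.End.HasEigenvalue (F : X →ₗ[ℂ] X) 1 := by
    intro h
    obtain ⟨v, hv, hv0⟩ := h.exists_hasEigenvector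
    rw [Module.End.mem_eigenspace_iff, one_smul] at hv
    refine hv0 (hS ?_)
    rw [hS_eq, map_zero]
    show (V : X →L[ℂ] X) (v - F v) = 0
    rw [show F v = v from hv, sub_self, map_zero]
  have h1F := (hF.hasEigenvalue_or_mem_resolventSet one_ne_zero).resolve_left hF1
  rw [spectrum.mem_resolventSet_iff, map_one] at h1F
  exact hS_eq ▸ V.isUnit.mul h1F

lemma IsWeylOp.exists_isCompactOperator_isUnit_add [CompleteSpace X] {S : X →L[ℂ] X}
    (hS : IsWeylOp S) : ∃ K : X →L[ℂ] X, IsCompactOperator K ∧ IsUnit (S + K) := by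
  obtain ⟨⟨hZ, hRcodim, -⟩, hrank⟩ := hS
  set Z := LinearMap.ker (S : X →ₗ[ℂ] X)
  set R := LinearMap.range (S : X →ₗ[ℂ] X)
  obtain ⟨N, hRN⟩ := R.exists_isCompl
  let eN := R.quotientEquivOfIsCompl N hRN
  have : FiniteDimensional ℂ N := Module.Finite.equiv eN
  obtain ⟨J⟩ : Nonempty (Z ≃ₗ[ℂ] N) :=
    FiniteDimensional.nonempty_linearEquiv_of_finrank_eq (hrank.trans eN.finrank_eq)
  obtain ⟨P, hP⟩ := Submodule.ClosedComplemented.of_finiteDimensional Z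
  -- `K` maps `ker S` isomorphically onto a complement `N` of `range S`
  -- and vanishes on a closed complement of `ker S`.
  let K₀ : X →L[ℂ] N := (J.toContinuousLinearEquiv : Z →L[ℂ] N) ∘L P
  refine ⟨N.subtypeL ∘L K₀,
    (isCompactOperator_of_locallyCompactSpace_dom K₀).clm_comp N.subtypeL,
    ContinuousLinearMap.isUnit_iff_bijective.2 ⟨?_, ?_⟩⟩
  · rw [injective_iff_map_eq_zero]
    intro x hx
    have hSK : S x = -(K₀ x : X) := eq_neg_of_add_eq_zero_left hx
    have hSx : S x = 0 := Submodule.disjoint_def.mp hRN.disjoint (S x) ⟨x, rfl⟩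
      (hSK ▸ N.neg_mem (K₀ x).2)
    have hPx : P x = 0 := by
      have hK₀x : K₀ x = 0 := by simpa [hSx] using hSK
      simpa [K₀] using hK₀x
    have := hP ⟨x, hSx⟩
    rw [hPx] at this
    exact congrArg Subtype.val this.symm
  · intro y
    obtain ⟨_, ⟨x, rfl⟩, n, hn, rfl⟩ :=
      Submodule.mem_sup.mp (hRN.sup_eq_top ▸ trivial : y ∈ R ⊔ N)
    set k : Z := J.symm ⟨n, hn⟩
    refine ⟨x - P x + k, ?_⟩
    have hPz : P (x - P x + k) = k := by rw [map_add, map_sub, hP, hP, sub_self, zero_add]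
    have hSz : S (x - P x + k) = S x := by
      have hZS : ∀ z : Z, S z = 0 := fun z => z.2
      rw [map_add, map_sub, hZS, hZS, sub_zero, add_zero]
    simp [K₀, hSz, hPz, k]

lemma iso_spa_diff_spW_subset_iso_sp [CompleteSpace X] (T : X →L[ℂ] X) :
    iso (spa T) \ spW T ⊆ iso (sp T) := by
  rintro l ⟨ha, hW⟩
  obtain ⟨K, hK, hunit⟩ := (not_not.1 hW : IsWeylOp _).exists_isCompactOperator_isUnit_add
  have hnear : ∀ᶠ μ in 𝓝 l, IsUnit (T - μ • 1 + K) := by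
    have hcont : Continuous fun μ : ℂ => T - μ • (1 : X →L[ℂ] X) + K := by fun_prop
    exact hcont.continuousAt.preimage_mem_nhds (Units.isOpen.mem_nhds hunit)
  rw [mem_iso_iff] at ha ⊢
  refine ⟨spa_subset_sp T ha.1, ?_⟩
  filter_upwards [ha.2, nhdsWithin_le_nhds hnear] with μ hμa hμK
  rw [mem_sp_iff_not_isUnit, not_not]
  exact isUnit_of_injective_of_isUnit_add hK hμK (injective_sub_smul_of_notMem_spa hμa)

lemma E0_subset_Ea (T : X →L[ℂ] X) : E0 T ⊆ Ea T := fun _ ⟨hiso, hp, _⟩ =>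
  ⟨mem_iso_of_subset (spa_subset_sp T) (spp_subset_spa T hp) hiso, hp⟩

lemma Ea_diff_spW_subset_E0 [CompleteSpace X] (T : X →L[ℂ] X) : Ea T \ spW T ⊆ E0 T :=
  fun _ ⟨⟨ha, hp⟩, hW⟩ =>
    ⟨iso_spa_diff_spW_subset_iso_sp T ⟨ha, hW⟩, hp, (not_not.1 hW : IsWeylOp _).1.1⟩

end ZProps

open ZProps in
theorem stmt1_general {X : Type*} [NormedAddCommGroup X] [NormedSpace ℂ X] [CompleteSpace X]
    (T : X →L[ℂ] X) :
    PropZEa T ↔ WeylThm T ∧ E0 T = Ea T := by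
  refine ⟨fun hZ => ?_, fun ⟨hW, hE⟩ => hW.trans hE⟩
  have hE : E0 T = Ea T := (E0_subset_Ea T).antisymm fun l hl =>
    Ea_diff_spW_subset_E0 T ⟨hl, (hZ.symm ▸ hl : l ∈ sp T \ spW T).2⟩
  exact ⟨hZ.trans hE.symm, hE⟩

open ZProps in
theorem stmt1 {X : Type*} [NormedAddCommGroup X] [NormedSpace ℂ X] [CompleteSpace X]
    (hinf : ¬ FiniteDimensional ℂ X) (T : X →L[ℂ] X) :
    PropZEa T ↔ WeylThm T ∧ E0 T = Ea T :=
  stmt1_general T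
end

section
/- Let T be a bounded linear operator on an infinite-dimensional complex Banach space. T satisfies property (Z_{E_a}) if and only if T satisfies property (Z_{Π_a}) and E_a(T) = Π_a(T). -/
open Set

/-!
Both properties compare `σ(T) \ σ_W(T)` with a set of spectral points, so the theorem reduces to
`Π_a(T) ⊆ E_a(T)` (always) and `E_a(T) ⊆ Π_a(T)` at points where `T - λ` is Weyl.

If `S = T - λ` has ascent `p` and `R(S^(p+1))` is closed, write `x = k + (x - k)` with
`k ∈ N(S^(p+1)) = N(S^p)` and `‖x - k‖ ≲ ‖S^(p+1) x‖`. Factoring `S^n - z^n` through `S - z` gives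
`‖z‖^p ‖x‖ ≲ ‖(S - z) x‖ + ‖z‖^(p+1) ‖x‖`, so `S - z` is bounded below for small `z ≠ 0`:
left poles are isolated in `σ_a(T)`, and they are eigenvalues since `p ≥ 1`.

Conversely, let `S` have finite-dimensional kernel and closed range, with `S - z` injective for
small `z ≠ 0`. Then `S` maps closed subspaces `Z` to closed subspaces (as `S Z = S (Z + N(S))`),
so every `R(S^n)` is closed. The spaces `N(S) ∩ R(S^n)` stabilise at some `d`, after which `S`
maps the closed hyperrange `⋂ R(S^n)` onto itself. A nonzero `v₀ ∈ N(S) ∩ R(S^d)` would then, by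
the open mapping theorem, start a chain `S v_(n+1) = v_n` with `‖v_n‖ ≤ C^n ‖v₀‖`, and
`∑ z^n v_n` would be an eigenvector for every small `z`. Hence `N(S) ∩ R(S^d) = 0`,
which bounds the ascent by `d`.
-/

namespace ContinuousLinearMap

variable {𝕜 E F : Type*} [NontriviallyNormedField 𝕜]
  [NormedAddCommGroup E] [NormedSpace 𝕜 E] [NormedAddCommGroup F] [NormedSpace 𝕜 F]

/-- `ZProps.spa T` is literally `{l | ¬ IsBoundedBelow (T - l • 1)}`. -/
def IsBoundedBelow (f : E →L[𝕜] F) : Prop := ∃ c > (0 : ℝ), ∀ x, c * ‖x‖ ≤ ‖f x‖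

theorem IsBoundedBelow.injective {f : E →L[𝕜] F} (hf : IsBoundedBelow f) :
    Function.Injective f := by
  obtain ⟨c, hc, hf⟩ := hf
  refine (injective_iff_map_eq_zero f).2 fun x hx => norm_le_zero_iff.1 ?_
  have := hf x
  rw [hx, norm_zero] at this
  nlinarith [norm_nonneg x]

section ClosedRange

variable [CompleteSpace E] [CompleteSpace F]

theorem exists_norm_sub_le_of_isClosed_range (f : E →L[𝕜] F)
    (hf : IsClosed (LinearMap.range (f : E →ₗ[𝕜] F) : Set F)) :
    ∃ C > 0, ∀ x, ∃ k, f k = 0 ∧ ‖x - k‖ ≤ C * ‖f x‖ := by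
  have : CompleteSpace (LinearMap.range (f : E →ₗ[𝕜] F)) := hf.completeSpace_coe
  let f' : E →L[𝕜] LinearMap.range (f : E →ₗ[𝕜] F) :=
    f.codRestrict _ (LinearMap.mem_range_self (f : E →ₗ[𝕜] F))
  have hf' : Function.Surjective f' := by
    rintro ⟨_, x, rfl⟩
    exact ⟨x, rfl⟩
  obtain ⟨C, hC, hpre⟩ := f'.exists_preimage_norm_le hf'
  refine ⟨C, hC, fun x => ?_⟩
  obtain ⟨y, hy, hyn⟩ := hpre (f' x)
  have hfy : f y = f x := congrArg Subtype.val hy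
  exact ⟨x - y, by rw [map_sub, hfy, sub_self], by rwa [sub_sub_cancel]⟩

theorem IsBoundedBelow.of_injective (f : E →L[𝕜] F) (hinj : Function.Injective f)
    (hf : IsClosed (LinearMap.range (f : E →ₗ[𝕜] F) : Set F)) : IsBoundedBelow f := by
  obtain ⟨C, hC, hCx⟩ := exists_norm_sub_le_of_isClosed_range f hf
  refine ⟨C⁻¹, inv_pos.2 hC, fun x => ?_⟩
  obtain ⟨k, hk, hxk⟩ := hCx x
  rw [hinj (hk.trans (map_zero f).symm), sub_zero] at hxk
  rwa [inv_mul_le_iff₀ hC]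

variable [CompleteSpace 𝕜]

theorem isClosed_map_of_isClosed_range (f : E →L[𝕜] F)
    [FiniteDimensional 𝕜 (LinearMap.ker (f : E →ₗ[𝕜] F))]
    (hf : IsClosed (LinearMap.range (f : E →ₗ[𝕜] F) : Set F))
    {Z : Submodule 𝕜 E} (hZ : IsClosed (Z : Set E)) :
    IsClosed (Z.map (f : E →ₗ[𝕜] F) : Set F) := by
  obtain ⟨C, hC, hCx⟩ := exists_norm_sub_le_of_isClosed_range f hf
  -- On the closed space `Z ⊔ ker f`, which has the same image as `Z`, every image point `f z`
  -- has a preimage `z - k` of norm at most `C * ‖f z‖`.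
  set Z' := Z ⊔ LinearMap.ker (f : E →ₗ[𝕜] F)
  have hZ' : IsClosed (Z' : Set E) := Submodule.isClosed_sup_finiteDimensional _ _ hZ
  have hmap : Z.map (f : E →ₗ[𝕜] F) = Z'.map (f : E →ₗ[𝕜] F) := by
    rw [Submodule.map_sup, LinearMap.le_ker_iff_map.1 le_rfl, sup_bot_eq]
  rw [hmap]
  have : CompleteSpace Z' := hZ'.completeSpace_coe
  let g : NormedAddGroupHom Z' F :=
    (f.comp Z'.subtypeL).toLinearMap.toAddMonoidHom.mkNormedAddGroupHom _
      (f.comp Z'.subtypeL).le_opNorm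
  have hg : g.SurjectiveOnWith (Z'.map (f : E →ₗ[𝕜] F)).toAddSubgroup C := by
    rintro _ ⟨z, hz, rfl⟩
    obtain ⟨k, hk, hzk⟩ := hCx z
    refine ⟨⟨z - k, Z'.sub_mem hz (Submodule.mem_sup_right hk)⟩, ?_, hzk⟩
    change f (z - k) = f z
    rw [map_sub, hk, sub_zero]
  refine isClosed_of_closure_subset fun y hy => ?_
  obtain ⟨z, hz, -⟩ := controlled_closure_of_complete hC one_pos hg y hy
  exact ⟨z, z.2, hz⟩

theorem isClosed_range_pow (S : E →L[𝕜] E)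
    [FiniteDimensional 𝕜 (LinearMap.ker (S : E →ₗ[𝕜] E))]
    (hS : IsClosed (LinearMap.range (S : E →ₗ[𝕜] E) : Set E)) (n : ℕ) :
    IsClosed (LinearMap.range ((S ^ n : E →L[𝕜] E) : E →ₗ[𝕜] E) : Set E) := by
  induction n with
  | zero => simp [Module.End.one_eq_id]
  | succ n ih =>
    rw [pow_succ', toLinearMap_mul, Module.End.mul_eq_comp, LinearMap.range_comp]
    exact isClosed_map_of_isClosed_range S hS ih

end ClosedRange

theorem apply_tsum_pow_smul (S : F →L[𝕜] F) {v : ℕ → F} (hv₀ : S (v 0) = 0)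
    (hv : ∀ n, S (v (n + 1)) = v n) {z : 𝕜} (hs : Summable fun n => z ^ n • v n) :
    S (∑' n, z ^ n • v n) = z • ∑' n, z ^ n • v n := by
  have hSs : Summable fun n => z ^ n • S (v n) := by
    simpa only [map_smul] using hs.mapL S
  rw [S.map_tsum hs, ← hs.tsum_const_smul z]
  simp only [map_smul]
  rw [hSs.tsum_eq_zero_add]
  simp only [hv₀, hv, smul_zero, zero_add, smul_smul, ← pow_succ']

theorem exists_eigenvector_of_surjective [CompleteSpace F] (S : F →L[𝕜] F)
    (hS : Function.Surjective S) {x₀ : F} (hx₀ : S x₀ = 0) (hne : x₀ ≠ 0) :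
    ∃ ε > 0, ∀ z : 𝕜, ‖z‖ < ε → ∃ g ≠ 0, S g = z • g := by
  obtain ⟨C, hC, hpre⟩ := S.exists_preimage_norm_le hS
  choose G hSG hG using hpre
  set v : ℕ → F := fun n => G^[n] x₀
  have hv : ∀ n, S (v (n + 1)) = v n := fun n => by
    simp only [v, Function.iterate_succ_apply', hSG]
  have hvn : ∀ n, ‖v n‖ ≤ C ^ n * ‖x₀‖ := fun n => by
    induction n with
    | zero => simp [v]
    | succ n ih =>
      calc ‖v (n + 1)‖ ≤ C * ‖v n‖ := by simp only [v, Function.iterate_succ_apply', hG]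
        _ ≤ C ^ (n + 1) * ‖x₀‖ := by rw [pow_succ']; nlinarith
  refine ⟨(2 * C)⁻¹, by positivity, fun z hz => ?_⟩
  set q := ‖z‖ * C
  have hq₀ : 0 ≤ q := by positivity
  have hq : q < 1 / 2 := by
    calc q < (2 * C)⁻¹ * C := mul_lt_mul_of_pos_right hz hC
      _ = 1 / 2 := by field_simp
  have hterm : ∀ n, ‖z ^ n • v n‖ ≤ ‖x₀‖ * q ^ n := fun n => by
    rw [norm_smul, norm_pow, mul_pow]
    calc ‖z‖ ^ n * ‖v n‖ ≤ ‖z‖ ^ n * (C ^ n * ‖x₀‖) := by gcongr; exact hvn n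
      _ = _ := by ring
  have hgeom := hasSum_geometric_of_lt_one hq₀ (by linarith)
  have hs : Summable fun n => z ^ n • v n :=
    Summable.of_norm_bounded (hgeom.summable.mul_left ‖x₀‖) hterm
  refine ⟨∑' n, z ^ n • v n, fun hg => ?_, apply_tsum_pow_smul S hx₀ hv hs⟩
  have htail : ‖∑' n, z ^ (n + 1) • v (n + 1)‖ ≤ ‖x₀‖ * q * (1 - q)⁻¹ :=
    tsum_of_norm_bounded (hgeom.mul_left (‖x₀‖ * q)) fun n => by
      simpa only [pow_succ', ← mul_assoc] using hterm (n + 1)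
  rw [hs.tsum_eq_zero_add, pow_zero, one_smul, add_eq_zero_iff_eq_neg] at hg
  have hx₀pos : 0 < ‖x₀‖ := norm_pos_iff.2 hne
  have : ‖x₀‖ * q * (1 - q)⁻¹ < ‖x₀‖ := by
    rw [mul_assoc, mul_lt_iff_lt_one_right hx₀pos, mul_inv_lt_iff₀ (by linarith)]
    linarith
  have : ‖v 0‖ < ‖x₀‖ := by
    rw [hg, norm_neg]
    exact htail.trans_lt this
  exact lt_irrefl _ this

theorem range_pow_le_range_pow (S : E →L[𝕜] E) {m n : ℕ} (h : m ≤ n) :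
    LinearMap.range ((S ^ n : E →L[𝕜] E) : E →ₗ[𝕜] E) ≤
      LinearMap.range ((S ^ m : E →L[𝕜] E) : E →ₗ[𝕜] E) := by
  obtain ⟨j, rfl⟩ := Nat.exists_eq_add_of_le h
  rw [pow_add, toLinearMap_mul, Module.End.mul_eq_comp]
  exact LinearMap.range_comp_le_range _ _

theorem exists_ker_inf_range_pow_eq (S : E →L[𝕜] E)
    [FiniteDimensional 𝕜 (LinearMap.ker (S : E →ₗ[𝕜] E))] :
    ∃ d, ∀ n, d ≤ n →
      LinearMap.ker (S : E →ₗ[𝕜] E) ⊓ LinearMap.range ((S ^ n : E →L[𝕜] E) : E →ₗ[𝕜] E) =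
        LinearMap.ker (S : E →ₗ[𝕜] E) ⊓ LinearMap.range ((S ^ d : E →L[𝕜] E) : E →ₗ[𝕜] E) := by
  set K : ℕ → Submodule 𝕜 E := fun n =>
    LinearMap.ker (S : E →ₗ[𝕜] E) ⊓ LinearMap.range ((S ^ n : E →L[𝕜] E) : E →ₗ[𝕜] E)
  have : ∀ n, FiniteDimensional 𝕜 (K n) := fun n => Submodule.finiteDimensional_of_le inf_le_left
  -- The decreasing chain stabilises at the index where its dimension is minimal.
  obtain ⟨d, hd⟩ := Nat.sInf_mem (Set.range_nonempty fun n => Module.finrank 𝕜 (K n))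
  refine ⟨d, fun n hn => Submodule.eq_of_le_of_finrank_le ?_ ?_⟩
  · exact inf_le_inf_left _ (range_pow_le_range_pow S hn)
  · exact hd.le.trans (Nat.sInf_le ⟨n, rfl⟩)

def hyperrange (S : E →L[𝕜] E) : Submodule 𝕜 E :=
  ⨅ n, LinearMap.range ((S ^ n : E →L[𝕜] E) : E →ₗ[𝕜] E)

theorem apply_mem_hyperrange (S : E →L[𝕜] E) {v : E} (hv : v ∈ S.hyperrange) :
    S v ∈ S.hyperrange := by
  refine Submodule.mem_iInf _ |>.2 fun n => ?_
  obtain ⟨w, rfl⟩ := Submodule.mem_iInf _ |>.1 hv n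
  refine ⟨S w, ?_⟩
  change (S ^ n * S) w = (S * S ^ n) w
  rw [← pow_succ, pow_succ']

theorem mem_hyperrange_of_ker_inf_range_pow_eq (S : E →L[𝕜] E) {d : ℕ}
    (hd : ∀ n, d ≤ n →
      LinearMap.ker (S : E →ₗ[𝕜] E) ⊓ LinearMap.range ((S ^ n : E →L[𝕜] E) : E →ₗ[𝕜] E) =
        LinearMap.ker (S : E →ₗ[𝕜] E) ⊓ LinearMap.range ((S ^ d : E →L[𝕜] E) : E →ₗ[𝕜] E))
    {v : E} (hv : v ∈ LinearMap.range ((S ^ d : E →L[𝕜] E) : E →ₗ[𝕜] E))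
    (hSv : S v ∈ S.hyperrange) : v ∈ S.hyperrange := by
  refine Submodule.mem_iInf _ |>.2 fun n => ?_
  rcases le_total n d with hnd | hdn
  · exact range_pow_le_range_pow S hnd hv
  obtain ⟨u, hu⟩ := Submodule.mem_iInf _ |>.1 hSv (n + 1)
  -- `v` differs from `S ^ n u` by an element of `ker S ⊓ range (S ^ d) = ker S ⊓ range (S ^ n)`.
  have hdiff : v - (S ^ n) u ∈
      LinearMap.ker (S : E →ₗ[𝕜] E) ⊓ LinearMap.range ((S ^ n : E →L[𝕜] E) : E →ₗ[𝕜] E) := by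
    rw [hd n hdn]
    refine ⟨?_, Submodule.sub_mem _ hv (range_pow_le_range_pow S hdn ⟨u, rfl⟩)⟩
    change S (v - (S ^ n) u) = 0
    change (S ^ (n + 1)) u = S v at hu
    rw [map_sub, ← hu, pow_succ']
    exact sub_self _
  have := Submodule.add_mem _ hdiff.2 ⟨u, rfl⟩
  rwa [coe_coe, sub_add_cancel] at this

theorem exists_mem_hyperrange_apply_eq (S : E →L[𝕜] E) {d : ℕ}
    (hd : ∀ n, d ≤ n →
      LinearMap.ker (S : E →ₗ[𝕜] E) ⊓ LinearMap.range ((S ^ n : E →L[𝕜] E) : E →ₗ[𝕜] E) =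
        LinearMap.ker (S : E →ₗ[𝕜] E) ⊓ LinearMap.range ((S ^ d : E →L[𝕜] E) : E →ₗ[𝕜] E))
    {y : E} (hy : y ∈ S.hyperrange) : ∃ x ∈ S.hyperrange, S x = y := by
  obtain ⟨w, hw⟩ := Submodule.mem_iInf _ |>.1 hy (d + 1)
  rw [pow_succ'] at hw
  change S ((S ^ d) w) = y at hw
  refine ⟨(S ^ d) w, S.mem_hyperrange_of_ker_inf_range_pow_eq hd ⟨w, rfl⟩ ?_, hw⟩
  rwa [hw]

theorem ker_pow_eq_ker_pow_succ_of_ker_inf_range_eq_bot (S : E →L[𝕜] E) {d : ℕ}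
    (hd : LinearMap.ker (S : E →ₗ[𝕜] E) ⊓
      LinearMap.range ((S ^ d : E →L[𝕜] E) : E →ₗ[𝕜] E) = ⊥) :
    LinearMap.ker ((S ^ d : E →L[𝕜] E) : E →ₗ[𝕜] E) =
      LinearMap.ker ((S ^ (d + 1) : E →L[𝕜] E) : E →ₗ[𝕜] E) := by
  refine le_antisymm ?_ fun x hx => ?_
  · rw [pow_succ', toLinearMap_mul, Module.End.mul_eq_comp]
    exact LinearMap.ker_le_ker_comp _ _
  · change (S ^ (d + 1)) x = 0 at hx
    rw [pow_succ'] at hx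
    have : (S ^ d) x ∈ LinearMap.ker (S : E →ₗ[𝕜] E) ⊓
        LinearMap.range ((S ^ d : E →L[𝕜] E) : E →ₗ[𝕜] E) := ⟨hx, x, rfl⟩
    rwa [hd, Submodule.mem_bot] at this

theorem exists_ker_pow_eq_ker_pow_succ [CompleteSpace 𝕜] [CompleteSpace E] (S : E →L[𝕜] E)
    [FiniteDimensional 𝕜 (LinearMap.ker (S : E →ₗ[𝕜] E))]
    (hS : IsClosed (LinearMap.range (S : E →ₗ[𝕜] E) : Set E)) {ε : ℝ} (hε : 0 < ε)
    (hinj : ∀ z : 𝕜, z ≠ 0 → ‖z‖ < ε → ∀ x, S x = z • x → x = 0) :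
    ∃ d, LinearMap.ker ((S ^ d : E →L[𝕜] E) : E →ₗ[𝕜] E) =
      LinearMap.ker ((S ^ (d + 1) : E →L[𝕜] E) : E →ₗ[𝕜] E) := by
  obtain ⟨d, hd⟩ := exists_ker_inf_range_pow_eq S
  refine ⟨d, S.ker_pow_eq_ker_pow_succ_of_ker_inf_range_eq_bot ?_⟩
  by_contra hne
  obtain ⟨x₀, ⟨hx₀, hx₀d⟩, hx₀ne⟩ := Submodule.exists_mem_ne_zero_of_ne_bot hne
  set R := S.hyperrange
  have hR : IsClosed (R : Set E) := by
    simp only [R, hyperrange, Submodule.coe_iInf]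
    exact isClosed_iInter (isClosed_range_pow S hS)
  have : CompleteSpace R := hR.completeSpace_coe
  let S' : R →L[𝕜] R := (S.comp R.subtypeL).codRestrict R fun v => S.apply_mem_hyperrange v.2
  have hS' : Function.Surjective S' := fun ⟨y, hy⟩ => by
    obtain ⟨x, hx, hSx⟩ := S.exists_mem_hyperrange_apply_eq hd hy
    exact ⟨⟨x, hx⟩, Subtype.ext hSx⟩
  have hx₀R : x₀ ∈ R := S.mem_hyperrange_of_ker_inf_range_pow_eq hd hx₀d <| by
    rw [show S x₀ = 0 from hx₀]
    exact R.zero_mem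
  obtain ⟨ε', hε', heig⟩ := exists_eigenvector_of_surjective S' hS' (x₀ := ⟨x₀, hx₀R⟩)
    (Subtype.ext hx₀) (by simpa using hx₀ne)
  obtain ⟨z, hz₀, hz⟩ := NormedField.exists_norm_lt 𝕜 (lt_min hε hε')
  obtain ⟨g, hg, hSg⟩ := heig z (hz.trans_le (min_le_right _ _))
  exact hg <| Subtype.ext <| hinj z (norm_pos_iff.1 hz₀) (hz.trans_le (min_le_left _ _)) g
    (congrArg Subtype.val hSg)

theorem norm_pow_apply_sub_le (S : E →L[𝕜] E) {z : 𝕜} (hz : ‖z‖ ≤ 1) (n : ℕ) (x : E) :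
    ‖(S ^ n) x - z ^ n • x‖ ≤ (∑ i ∈ Finset.range n, ‖S ^ i‖) * ‖(S - z • 1) x‖ := by
  have hz1 : ∀ m : ℕ, ‖(z • (1 : E →L[𝕜] E)) ^ m‖ ≤ 1 := fun m => by
    rw [smul_pow, one_pow, norm_smul, norm_pow]
    exact mul_le_one₀ (pow_le_one₀ (norm_nonneg _) hz) (norm_nonneg _) norm_id_le
  have key := ((Commute.one_right S).smul_right z).geom_sum₂_mul n
  have hx : (S ^ n) x - z ^ n • x =
      (∑ i ∈ Finset.range n, S ^ i * (z • (1 : E →L[𝕜] E)) ^ (n - 1 - i)) ((S - z • 1) x) := by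
    rw [← mul_apply_eq_comp, key]
    simp [smul_pow]
  rw [hx]
  refine (le_opNorm _ _).trans (mul_le_mul_of_nonneg_right ?_ (norm_nonneg _))
  refine (norm_sum_le _ _).trans (Finset.sum_le_sum fun i _ => ?_)
  calc ‖S ^ i * (z • (1 : E →L[𝕜] E)) ^ (n - 1 - i)‖
      ≤ ‖S ^ i‖ * ‖(z • (1 : E →L[𝕜] E)) ^ (n - 1 - i)‖ := norm_mul_le _ _
    _ ≤ ‖S ^ i‖ := mul_le_of_le_one_right (norm_nonneg _) (hz1 _)

theorem exists_pow_mul_norm_le_of_ker_pow_eq [CompleteSpace E] (S : E →L[𝕜] E) {p : ℕ}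
    (hker : LinearMap.ker ((S ^ p : E →L[𝕜] E) : E →ₗ[𝕜] E) =
      LinearMap.ker ((S ^ (p + 1) : E →L[𝕜] E) : E →ₗ[𝕜] E))
    (hcl : IsClosed (LinearMap.range ((S ^ (p + 1) : E →L[𝕜] E) : E →ₗ[𝕜] E) : Set E)) :
    ∃ A B : ℝ, 0 ≤ A ∧ 0 ≤ B ∧ ∀ z : 𝕜, ‖z‖ ≤ 1 → ∀ x,
      ‖z‖ ^ p * ‖x‖ ≤ A * ‖(S - z • 1) x‖ + B * ‖z‖ ^ (p + 1) * ‖x‖ := by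
  obtain ⟨C, hC, happrox⟩ := exists_norm_sub_le_of_isClosed_range (S ^ (p + 1)) hcl
  set M := ∑ i ∈ Finset.range p, ‖S ^ i‖
  set M' := ∑ i ∈ Finset.range (p + 1), ‖S ^ i‖
  have hM : 0 ≤ M := Finset.sum_nonneg fun _ _ => norm_nonneg _
  have hM' : 0 ≤ M' := Finset.sum_nonneg fun _ _ => norm_nonneg _
  set K := M * (‖S‖ + 1) + 1
  have hK : 0 ≤ K := by positivity
  refine ⟨M + K * C * M', K * C, by positivity, by positivity, fun z hz x => ?_⟩
  set η := ‖(S - z • 1) x‖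
  obtain ⟨k, hk₀, hxk⟩ := happrox x
  have hkp : (S ^ p) k = 0 := by
    have : k ∈ LinearMap.ker ((S ^ (p + 1) : E →L[𝕜] E) : E →ₗ[𝕜] E) := hk₀
    rwa [← hker] at this
  have hSx : ‖(S ^ (p + 1)) x‖ ≤ M' * η + ‖z‖ ^ (p + 1) * ‖x‖ := by
    have := norm_pow_apply_sub_le S hz (p + 1) x
    have h := norm_le_insert' ((S ^ (p + 1)) x) (z ^ (p + 1) • x)
    rw [norm_smul, norm_pow] at h
    linarith
  have hk : ‖z‖ ^ p * ‖k‖ ≤ M * ‖(S - z • 1) k‖ := by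
    simpa [hkp, norm_smul] using norm_pow_apply_sub_le S hz p k
  have hSk : ‖(S - z • 1) k‖ ≤ η + (‖S‖ + 1) * ‖x - k‖ := by
    have hsub : (S - z • 1) k = (S - z • 1) x - (S (x - k) - z • (x - k)) := by
      simp only [sub_apply, smul_apply, one_apply_eq_self, map_sub, smul_sub]
      abel
    rw [hsub]
    refine (norm_sub_le _ _).trans (add_le_add le_rfl ?_)
    calc ‖S (x - k) - z • (x - k)‖ ≤ ‖S (x - k)‖ + ‖z • (x - k)‖ := norm_sub_le _ _
      _ ≤ ‖S‖ * ‖x - k‖ + ‖z‖ * ‖x - k‖ := by rw [norm_smul]; gcongr; exact le_opNorm _ _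
      _ ≤ (‖S‖ + 1) * ‖x - k‖ := by nlinarith [norm_nonneg (x - k)]
  have hzp : ‖z‖ ^ p ≤ 1 := pow_le_one₀ (norm_nonneg _) hz
  calc ‖z‖ ^ p * ‖x‖ ≤ ‖z‖ ^ p * ‖k‖ + ‖x - k‖ := by
        have := mul_le_mul_of_nonneg_left (norm_le_insert' x k) (pow_nonneg (norm_nonneg z) p)
        nlinarith [norm_nonneg (x - k)]
    _ ≤ M * η + K * ‖x - k‖ := by
        have := mul_le_mul_of_nonneg_left hSk hM
        nlinarith
    _ ≤ M * η + K * (C * (M' * η + ‖z‖ ^ (p + 1) * ‖x‖)) := by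
        gcongr
        exact hxk.trans (mul_le_mul_of_nonneg_left hSx hC.le)
    _ = (M + K * C * M') * η + K * C * ‖z‖ ^ (p + 1) * ‖x‖ := by ring

theorem exists_isBoundedBelow_sub_smul [CompleteSpace E] (S : E →L[𝕜] E) {p : ℕ}
    (hker : LinearMap.ker ((S ^ p : E →L[𝕜] E) : E →ₗ[𝕜] E) =
      LinearMap.ker ((S ^ (p + 1) : E →L[𝕜] E) : E →ₗ[𝕜] E))
    (hcl : IsClosed (LinearMap.range ((S ^ (p + 1) : E →L[𝕜] E) : E →ₗ[𝕜] E) : Set E)) :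
    ∃ ε > 0, ∀ z : 𝕜, z ≠ 0 → ‖z‖ < ε → IsBoundedBelow (S - z • 1) := by
  obtain ⟨A, B, hA, hB, hest⟩ := exists_pow_mul_norm_le_of_ker_pow_eq S hker hcl
  refine ⟨min 1 (2 * (B + 1))⁻¹, by positivity, fun z hz hzε => ?_⟩
  have hz1 : ‖z‖ ≤ 1 := (hzε.trans_le (min_le_left _ _)).le
  have hBz : B * ‖z‖ ≤ 1 / 2 :=
    calc B * ‖z‖ ≤ (B + 1) * (2 * (B + 1))⁻¹ := by
          gcongr
          · linarith
          · exact (hzε.trans_le (min_le_right _ _)).le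
      _ = 1 / 2 := by field_simp
  refine ⟨‖z‖ ^ p / (2 * (A + 1)), by positivity, fun x => ?_⟩
  have hhalf : B * ‖z‖ ^ (p + 1) * ‖x‖ ≤ 1 / 2 * (‖z‖ ^ p * ‖x‖) := by
    rw [pow_succ, show B * (‖z‖ ^ p * ‖z‖) * ‖x‖ = B * ‖z‖ * (‖z‖ ^ p * ‖x‖) by ring]
    exact mul_le_mul_of_nonneg_right hBz (by positivity)
  rw [div_mul_eq_mul_div, div_le_iff₀ (by positivity)]
  nlinarith [hest z hz1 x, norm_nonneg ((S - z • 1) x)]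

end ContinuousLinearMap

namespace ZProps

variable {X : Type*} [NormedAddCommGroup X] [NormedSpace ℂ X] [CompleteSpace X]

open ContinuousLinearMap

theorem leftPoles_subset_Ea (T : X →L[ℂ] X) : leftPoles T ⊆ Ea T := by
  rintro l ⟨hla, hasc, hcl⟩
  set S : X →L[ℂ] X := T - l • 1
  obtain ⟨ε, hε, hbb⟩ := S.exists_isBoundedBelow_sub_smul (Nat.sInf_mem hasc) hcl
  refine ⟨⟨hla, ε, hε, fun μ hμ hμl => ?_⟩, ?_⟩
  · by_contra! hlt
    apply hμ
    rw [show T - μ • 1 = S - (μ - l) • 1 by simp only [S, sub_smul]; abel]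
    exact hbb (μ - l) (sub_ne_zero.2 hμl) hlt
  · by_contra hnot
    have hinj : Function.Injective S := by
      refine (injective_iff_map_eq_zero _).2 fun x hx => ?_
      by_contra hx0
      refine hnot ⟨x, hx0, ?_⟩
      simpa [S, sub_eq_zero] using hx
    have hasc0 : ascent S = 0 := by
      refine Nat.eq_zero_of_le_zero (Nat.sInf_le ?_)
      change LinearMap.ker _ = LinearMap.ker _
      rw [pow_zero, pow_one, LinearMap.ker_eq_bot.2 hinj]
      exact LinearMap.ker_eq_bot.2 fun x y h => h
    rw [hasc0, zero_add, pow_one] at hcl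
    exact hla (IsBoundedBelow.of_injective S hinj hcl)

theorem mem_leftPoles_of_mem_Ea (T : X →L[ℂ] X) {l : ℂ} (hl : l ∈ Ea T)
    [FiniteDimensional ℂ (LinearMap.ker ((T - l • 1 : X →L[ℂ] X) : X →ₗ[ℂ] X))]
    (hr : IsClosed (LinearMap.range ((T - l • 1 : X →L[ℂ] X) : X →ₗ[ℂ] X) : Set X)) :
    l ∈ leftPoles T := by
  obtain ⟨⟨hla, ε, hε, hiso⟩, -⟩ := hl
  set S : X →L[ℂ] X := T - l • 1
  have hinj : ∀ z : ℂ, z ≠ 0 → ‖z‖ < ε → ∀ x, S x = z • x → x = 0 := by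
    intro z hz hzε x hx
    have hbb : IsBoundedBelow (T - (l + z) • 1) := by
      by_contra h
      have := hiso (l + z) h (by simpa using hz)
      rw [add_sub_cancel_left] at this
      linarith
    refine hbb.injective ?_
    rw [show T - (l + z) • 1 = S - z • 1 by simp only [S, add_smul]; abel, map_zero]
    simp [hx]
  obtain ⟨d, hd⟩ := S.exists_ker_pow_eq_ker_pow_succ hr hε hinj
  exact ⟨hla, ⟨d, hd⟩, S.isClosed_range_pow hr _⟩

end ZProps

open ZProps in
theorem stmt3_general {X : Type*} [NormedAddCommGroup X] [NormedSpace ℂ X] [CompleteSpace X]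
    (T : X →L[ℂ] X) :
    PropZEa T ↔ PropZPa T ∧ Ea T = leftPoles T := by
  refine ⟨fun h => ?_, fun ⟨h, hE⟩ => h.trans hE.symm⟩
  have hE : Ea T = leftPoles T := by
    refine Subset.antisymm (fun l hl => ?_) (leftPoles_subset_Ea T)
    obtain ⟨⟨hker, -, hrange⟩, -⟩ : IsWeylOp (T - l • 1) :=
      not_not.1 (h ▸ hl : l ∈ sp T \ spW T).2
    exact mem_leftPoles_of_mem_Ea T hl hrange
  exact ⟨h.trans hE, hE⟩

open ZProps in
theorem stmt3 {X : Type*} [NormedAddCommGroup X] [NormedSpace ℂ X] [CompleteSpace X]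
    (hinf : ¬ FiniteDimensional ℂ X) (T : X →L[ℂ] X) :
    PropZEa T ↔ PropZPa T ∧ Ea T = leftPoles T :=
  stmt3_general T
end

section
/- Let T be a bounded linear operator on an infinite-dimensional complex Banach space. T satisfies property (Z_{E_a}) if and only if T satisfies property (aw) (σ(T)\σ_W(T) = E_a^0(T)) and E_a(T) = E_a^0(T). -/
open Set

namespace ZProps

variable {X : Type*} [NormedAddCommGroup X] [NormedSpace ℂ X]

theorem Ea0_subset_Ea (T : X →L[ℂ] X) : Ea0 T ⊆ Ea T :=
  fun _ hl => ⟨hl.1, hl.2.1⟩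

theorem mem_Ea0_of_mem_Ea_of_notMem_spW {T : X →L[ℂ] X} {l : ℂ} (hl : l ∈ Ea T)
    (hW : l ∉ spW T) : l ∈ Ea0 T :=
  ⟨hl.1, hl.2, (not_not.mp hW).1.1⟩

theorem Ea_eq_Ea0_of_propZEa {T : X →L[ℂ] X} (h : PropZEa T) : Ea T = Ea0 T :=
  Set.Subset.antisymm
    (fun _ hl => mem_Ea0_of_mem_Ea_of_notMem_spW hl (h ▸ hl : _ ∈ sp T \ spW T).2)
    (Ea0_subset_Ea T)

end ZProps

open ZProps in
theorem stmt6_general {X : Type*} [NormedAddCommGroup X] [NormedSpace ℂ X]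
    (T : X →L[ℂ] X) :
    PropZEa T ↔ PropAw T ∧ Ea T = Ea0 T := by
  constructor
  · intro h
    have hEE := Ea_eq_Ea0_of_propZEa h
    exact ⟨h.trans hEE, hEE⟩
  · rintro ⟨h, hEE⟩
    exact h.trans hEE.symm

open ZProps in
theorem stmt6 {X : Type*} [NormedAddCommGroup X] [NormedSpace ℂ X] [CompleteSpace X]
    (hinf : ¬ FiniteDimensional ℂ X) (T : X →L[ℂ] X) :
    PropZEa T ↔ PropAw T ∧ Ea T = Ea0 T :=
  stmt6_general T
end

section
/- Let T be a bounded linear operator on an infinite-dimensional complex Banach space X. If T satisfies property (Z_{Π_a}), i.e. σ(T)\σ_W(T) = Π_a(T), then Π_a^0(T) = Π_a(T) = Π^0(T) = Π(T). -/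
open Set

/-!
Under `(Z_{Π_a})` every left pole `λ` lies outside the Weyl spectrum, so `S = T - λ` is Fredholm
of index zero. The index is additive under composition, so every power of `S` has index zero;
when `N(S^a) = N(S^(a+1))` this forces `R(S^a)` and `R(S^(a+1))` to have the same finite
codimension, hence to coincide: `λ` is a pole of finite rank. Conversely, at a pole with ascent
`a` the descent is at most `a`, so `X = N(S^a) ⊕ R(S^a)`; the closed complement `N(S^a)` makes
`R(S^a) = R(S^(a+1))` closed, and `N(S) ≠ 0` since otherwise `S` would be bijective.
Hence `Π_a ⊆ Π^0 ⊆ Π ⊆ Π_a`.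
-/

open Module Submodule LinearMap Cardinal

universe u

section Index

variable {K : Type*} [DivisionRing K] {V W U : Type u}
  [AddCommGroup V] [Module K V] [AddCommGroup W] [Module K W] [AddCommGroup U] [Module K U]

theorem Submodule.rank_quotient_eq_rank_map_mkQ_add {N P : Submodule K V} (hNP : N ≤ P) :
    Module.rank K (V ⧸ N) = Module.rank K (P.map N.mkQ) + Module.rank K (V ⧸ P) := by
  rw [← (quotientQuotientEquivQuotient N P hNP).rank_eq, add_comm, rank_quotient_add_rank]

theorem Submodule.rank_comap_subtype (p q : Submodule K V) :
    Module.rank K (q.comap p.subtype) = Module.rank K (p ⊓ q : Submodule K V) := by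
  rw [((q.comap p.subtype).equivMapOfInjective _ p.injective_subtype).rank_eq,
    map_comap_eq, range_subtype]

variable (A : W →ₗ[K] U) (B : V →ₗ[K] W)

theorem LinearMap.rank_ker_comp :
    Module.rank K (A ∘ₗ B).ker =
      Module.rank K B.ker + Module.rank K (A.ker ⊓ B.range : Submodule K W) := by
  set β := B.domRestrict (A ∘ₗ B).ker
  have hker : β.ker = B.ker.comap (A ∘ₗ B).ker.subtype := ker_domRestrict _ _
  have hrange : β.range = A.ker ⊓ B.range := by
    rw [range_domRestrict, ker_comp, map_comap_eq, inf_comm]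
  rw [← rank_range_add_rank_ker β, hker, hrange, rank_comap_subtype,
    inf_eq_right.mpr (ker_le_ker_comp B A), add_comm]

theorem LinearMap.rank_quotient_range_comp :
    Module.rank K (U ⧸ (A ∘ₗ B).range) =
      Module.rank K (W ⧸ (B.range ⊔ A.ker)) + Module.rank K (U ⧸ A.range) := by
  set g := (A ∘ₗ B).range.mkQ ∘ₗ A
  have hker : g.ker = B.range ⊔ A.ker := by
    rw [ker_comp, ker_mkQ, range_comp, comap_map_eq]
  have hrange : g.range = A.range.map (A ∘ₗ B).range.mkQ := range_comp _ _
  rw [rank_quotient_eq_rank_map_mkQ_add (range_comp_le_range B A), ← hrange, ← hker,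
    g.quotKerEquivRange.rank_eq]

theorem LinearMap.rank_quotient_range_add_rank_inf :
    Module.rank K (W ⧸ B.range) + Module.rank K (A.ker ⊓ B.range : Submodule K W) =
      Module.rank K (W ⧸ (B.range ⊔ A.ker)) + Module.rank K A.ker := by
  set g := B.range.mkQ ∘ₗ A.ker.subtype
  have hker : g.ker = B.range.comap A.ker.subtype := by rw [ker_comp, ker_mkQ]
  have hrange : g.range = (B.range ⊔ A.ker).map B.range.mkQ := by
    rw [range_comp, range_subtype, Submodule.map_sup, mkQ_map_self, bot_sup_eq]
  rw [rank_quotient_eq_rank_map_mkQ_add le_sup_left, ← hrange, ← rank_range_add_rank_ker g,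
    hker, rank_comap_subtype]
  ring

/-- Additivity of the Fredholm index, with the terms moved across so that no subtraction occurs;
ranks are cardinals, so no finiteness assumption is needed. -/
theorem LinearMap.rank_ker_comp_add_rank_quotient_range :
    Module.rank K (A ∘ₗ B).ker + Module.rank K (U ⧸ A.range) + Module.rank K (W ⧸ B.range) =
      Module.rank K A.ker + Module.rank K B.ker + Module.rank K (U ⧸ (A ∘ₗ B).range) := by
  rw [rank_ker_comp, rank_quotient_range_comp]
  calc _ = Module.rank K B.ker + Module.rank K (U ⧸ A.range) +
        (Module.rank K (W ⧸ B.range) + Module.rank K (A.ker ⊓ B.range : Submodule K W)) := by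
          ring
    _ = _ := by rw [rank_quotient_range_add_rank_inf]; ring

end Index

namespace Module.End

variable {K : Type*} [DivisionRing K] {V : Type u} [AddCommGroup V] [Module K V]

def IsAlgebraicWeyl (f : End K V) : Prop :=
  Module.rank K f.ker < ℵ₀ ∧ Module.rank K f.ker = Module.rank K (V ⧸ f.range)

theorem IsAlgebraicWeyl.pow {f : End K V} (hf : f.IsAlgebraicWeyl) (n : ℕ) :
    (f ^ n).IsAlgebraicWeyl := by
  induction n with
  | zero =>
    have hker : (f ^ 0).ker = ⊥ := by simp [one_eq_id]
    have hrange : (f ^ 0).range = ⊤ := by simp [one_eq_id]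
    rw [IsAlgebraicWeyl, hker, hrange]
    simp [aleph0_pos]
  | succ n ih =>
    obtain ⟨hfin, hf⟩ := hf
    obtain ⟨hfin_n, hf_n⟩ := ih
    rw [IsAlgebraicWeyl, pow_succ', mul_eq_comp]
    refine ⟨?_, ?_⟩
    · rw [rank_ker_comp]
      exact add_lt_aleph0 hfin_n ((rank_mono inf_le_left).trans_lt hfin)
    · have h := rank_ker_comp_add_rank_quotient_range f (f ^ n)
      rw [← hf, ← hf_n, add_assoc, add_comm (Module.rank K f.ker),
        add_comm _ (Module.rank K (V ⧸ _))] at h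
      exact (add_right_inj_of_lt_aleph0 (add_lt_aleph0 hfin_n hfin)).mp h

theorem IsAlgebraicWeyl.range_pow_succ_eq {f : End K V} (hf : f.IsAlgebraicWeyl) {a : ℕ}
    (ha : (f ^ a).ker = (f ^ (a + 1)).ker) : (f ^ a).range = (f ^ (a + 1)).range := by
  obtain ⟨hfin_a, h_a⟩ := hf.pow a
  obtain ⟨-, h_succ⟩ := hf.pow (a + 1)
  have hle : (f ^ (a + 1)).range ≤ (f ^ a).range := by
    rw [pow_succ, mul_eq_comp]; exact range_comp_le_range _ _
  have h := rank_quotient_eq_rank_map_mkQ_add hle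
  rw [← h_succ, ← ha, h_a] at h
  have hzero : Module.rank K ((f ^ a).range.map (f ^ (a + 1)).range.mkQ) = 0 := by
    rw [h_a] at hfin_a
    exact (add_right_inj_of_lt_aleph0 hfin_a).mp (by rw [zero_add]; exact h.symm)
  refine le_antisymm ?_ hle
  rwa [rank_eq_zero, ← le_ker_iff_map, ker_mkQ] at hzero

theorem range_pow_constant {f : End K V} {k : ℕ} (h : (f ^ k).range = (f ^ (k + 1)).range)
    (m : ℕ) : (f ^ k).range = (f ^ (k + m)).range := by
  have range_pow_succ (n : ℕ) : (f ^ (n + 1)).range = (f ^ n).range.map f := by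
    rw [pow_succ', mul_eq_comp, LinearMap.range_comp]
  induction m with
  | zero => rfl
  | succ m ih => rw [← add_assoc, range_pow_succ, ← ih, ← range_pow_succ, ← h]

theorem range_pow_succ_eq_of_ker_pow_succ_eq {f : End K V} {a d : ℕ}
    (ha : (f ^ a).ker = (f ^ (a + 1)).ker) (hd : (f ^ d).range = (f ^ (d + 1)).range) :
    (f ^ a).range = (f ^ (a + 1)).range := by
  refine le_antisymm ?_ (by rw [pow_succ, mul_eq_comp]; exact range_comp_le_range _ _)
  rintro - ⟨x, rfl⟩
  obtain ⟨z, hz⟩ : (f ^ d) x ∈ (f ^ (d + 1)).range := hd ▸ mem_range_self _ x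
  have hker_le : (f ^ d).ker ≤ (f ^ a).ker := by
    rw [ker_pow_constant ha d, pow_add, mul_eq_comp]
    exact ker_le_ker_comp _ _
  have hker : x - f z ∈ (f ^ a).ker :=
    hker_le (by rw [mem_ker, map_sub, ← mul_apply, ← pow_succ, hz, sub_self])
  refine ⟨z, ?_⟩
  rw [mem_ker, map_sub, sub_eq_zero] at hker
  rw [hker, pow_succ, mul_apply]

theorem isCompl_ker_pow_range_pow {f : End K V} {n : ℕ}
    (hk : (f ^ n).ker = (f ^ (n + 1)).ker)
    (hr : (f ^ n).range = (f ^ (n + 1)).range) : IsCompl (f ^ n).ker (f ^ n).range := by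
  constructor
  · rw [disjoint_iff, eq_bot_iff]
    rintro - ⟨hx, ⟨y, rfl⟩⟩
    have hy : y ∈ (f ^ (n + n)).ker := by rwa [mem_ker, pow_add, mul_apply]
    rwa [← ker_pow_constant hk n, mem_ker] at hy
  · rw [codisjoint_iff, eq_top_iff]
    intro x _
    obtain ⟨z, hz⟩ : (f ^ n) x ∈ (f ^ (n + n)).range :=
      range_pow_constant hr n ▸ mem_range_self _ x
    refine mem_sup.mpr ⟨x - (f ^ n) z, ?_, (f ^ n) z, mem_range_self _ z, sub_add_cancel x _⟩
    rw [mem_ker, map_sub, ← mul_apply, ← pow_add, hz, sub_self]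

end Module.End

theorem ContinuousLinearMap.isClosed_range_of_isCompl {𝕜 E F : Type*}
    [NontriviallyNormedField 𝕜] [NormedAddCommGroup E] [NormedSpace 𝕜 E] [CompleteSpace E]
    [NormedAddCommGroup F] [NormedSpace 𝕜 F] [CompleteSpace F]
    (f : E →L[𝕜] F) {G : Submodule 𝕜 F} (h : IsCompl f.range G) (hG : IsClosed (G : Set F)) :
    IsClosed (f.range : Set F) := by
  have : IsClosed (f.ker : Set E) := f.isClosed_ker
  set g := f.ker.liftQL f le_rfl
  have hrange : g.range = f.range := range_liftQ _ _ _
  rw [← hrange] at h ⊢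
  exact g.closed_complemented_range_of_isCompl_of_ker_eq_bot G h hG
    (ker_liftQ_eq_bot _ _ _ le_rfl)

namespace ZProps

variable {X : Type*} [NormedAddCommGroup X] [NormedSpace ℂ X]

theorem IsWeylOp.isAlgebraicWeyl {S : X →L[ℂ] X} (hS : IsWeylOp S) :
    Module.End.IsAlgebraicWeyl (S : X →ₗ[ℂ] X) := by
  obtain ⟨⟨hker, hcoker, -⟩, hindex⟩ := hS
  exact ⟨rank_lt_aleph0 ℂ _, by rw [← finrank_eq_rank, ← finrank_eq_rank, hindex]⟩

theorem IsWeylOp.hasFiniteDescent {S : X →L[ℂ] X} (hS : IsWeylOp S) (ha : HasFiniteAscent S) :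
    HasFiniteDescent S := by
  obtain ⟨a, ha⟩ := ha
  refine ⟨a, ?_⟩
  simp only [ContinuousLinearMap.toLinearMap_pow] at ha ⊢
  exact hS.isAlgebraicWeyl.range_pow_succ_eq ha

theorem leftPoles_subset_poles0 {T : X →L[ℂ] X} (h : PropZPa T) : leftPoles T ⊆ poles0 T := by
  intro l hl
  have hmem : l ∈ sp T \ spW T := h ▸ hl
  have hW : IsWeylOp (T - l • 1) := not_not.mp hmem.2
  exact ⟨⟨hmem.1, hl.2.1, hW.hasFiniteDescent hl.2.1⟩, hW.1.1⟩

theorem mem_spa_of_ker_ne_bot {T : X →L[ℂ] X} {l : ℂ} (h : (T - l • 1).ker ≠ ⊥) :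
    l ∈ spa T := by
  obtain ⟨v, hv, hv0⟩ := Submodule.exists_mem_ne_zero_of_ne_bot h
  rintro ⟨c, hc, hbdd⟩
  have hcv := hbdd v
  rw [show (T - l • 1) v = 0 from hv, norm_zero] at hcv
  exact (mul_pos hc (norm_pos_iff.mpr hv0)).not_ge hcv

theorem ker_ne_bot_of_mem_sp_of_hasFiniteDescent [CompleteSpace X] {T : X →L[ℂ] X} {l : ℂ}
    (hl : l ∈ sp T) (hd : HasFiniteDescent (T - l • 1)) : (T - l • 1).ker ≠ ⊥ := by
  intro hker
  obtain ⟨d, hd⟩ := hd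
  simp only [ContinuousLinearMap.toLinearMap_pow] at hd
  have hrange : (T - l • 1).range = ⊤ := by
    have h01 := Module.End.range_pow_succ_eq_of_ker_pow_succ_eq (a := 0)
      (by simpa [Module.End.one_eq_id] using hker.symm) hd
    simpa [Module.End.one_eq_id] using h01.symm
  apply spectrum.mem_iff.mp hl
  rw [← neg_sub, Algebra.algebraMap_eq_smul_one]
  exact (ContinuousLinearMap.isUnit_iff_bijective.mpr
    ⟨ker_eq_bot.mp hker, range_eq_top.mp hrange⟩).neg

theorem poles_subset_leftPoles [CompleteSpace X] (T : X →L[ℂ] X) : poles T ⊆ leftPoles T := by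
  rintro l ⟨hsp, hasc, hdesc⟩
  refine ⟨mem_spa_of_ker_ne_bot (ker_ne_bot_of_mem_sp_of_hasFiniteDescent hsp hdesc), hasc, ?_⟩
  set S := T - l • 1
  set a := ascent S
  obtain ⟨d, hd⟩ := hdesc
  have ha : LinearMap.ker ((S ^ a : X →L[ℂ] X) : X →ₗ[ℂ] X) =
      LinearMap.ker ((S ^ (a + 1) : X →L[ℂ] X) : X →ₗ[ℂ] X) := Nat.sInf_mem hasc
  simp only [ContinuousLinearMap.toLinearMap_pow] at ha hd ⊢
  have hr := Module.End.range_pow_succ_eq_of_ker_pow_succ_eq ha hd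
  have hcompl := (Module.End.isCompl_ker_pow_range_pow ha hr).symm
  rw [← hr, ← ContinuousLinearMap.toLinearMap_pow]
  rw [← ContinuousLinearMap.toLinearMap_pow] at hcompl
  exact (S ^ a).isClosed_range_of_isCompl hcompl (S ^ a).isClosed_ker

end ZProps

open ZProps in
theorem stmt8_general {X : Type*} [NormedAddCommGroup X] [NormedSpace ℂ X] [CompleteSpace X]
    (T : X →L[ℂ] X) (h : PropZPa T) :
    leftPoles0 T = leftPoles T ∧ leftPoles T = poles0 T ∧ poles0 T = poles T := by
  have hLP : leftPoles T ⊆ poles0 T := leftPoles_subset_poles0 h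
  have hPL : poles T ⊆ leftPoles T := poles_subset_leftPoles T
  have hP0 : poles0 T ⊆ poles T := fun _ hl => hl.1
  exact ⟨subset_antisymm (fun _ hl => hl.1) (fun _ hl => ⟨hl, (hLP hl).2⟩),
    subset_antisymm hLP (hPL.trans' hP0), subset_antisymm hP0 (hLP.trans' hPL)⟩

open ZProps in
theorem stmt8 {X : Type*} [NormedAddCommGroup X] [NormedSpace ℂ X] [CompleteSpace X]
    (hinf : ¬ FiniteDimensional ℂ X) (T : X →L[ℂ] X) (h : PropZPa T) :
    leftPoles0 T = leftPoles T ∧ leftPoles T = poles0 T ∧ poles0 T = poles T :=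
  stmt8_general T h
end

section
/- Let T be a bounded linear operator on an infinite-dimensional complex Banach space. T satisfies property (Z_{Π_a}) if and only if T satisfies property (ab) (σ(T)\σ_W(T) = Π_a^0(T)) and Π_a(T) = Π_a^0(T). -/
open Set

namespace ZProps

variable {X : Type*} [NormedAddCommGroup X] [NormedSpace ℂ X] {T : X →L[ℂ] X}

theorem leftPoles0_subset_leftPoles : leftPoles0 T ⊆ leftPoles T := fun _ hl => hl.1

theorem finiteDimensional_ker_of_notMem_spW {l : ℂ} (hl : l ∉ spW T) :
    FiniteDimensional ℂ (LinearMap.ker ((T - l • 1 : X →L[ℂ] X) : X →ₗ[ℂ] X)) :=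
  (not_not.mp hl).1.1

theorem PropZPa.leftPoles_eq_leftPoles0 (h : PropZPa T) : leftPoles T = leftPoles0 T := by
  refine leftPoles0_subset_leftPoles.antisymm' fun l hl => ⟨hl, ?_⟩
  rw [← h] at hl
  exact finiteDimensional_ker_of_notMem_spW hl.2

end ZProps

open ZProps in
theorem stmt10_general {X : Type*} [NormedAddCommGroup X] [NormedSpace ℂ X]
    (T : X →L[ℂ] X) :
    PropZPa T ↔ PropAb T ∧ leftPoles T = leftPoles0 T := by
  constructor
  · intro h
    have hpoles := h.leftPoles_eq_leftPoles0
    exact ⟨h.trans hpoles, hpoles⟩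
  · rintro ⟨hab, hpoles⟩
    exact hab.trans hpoles.symm

open ZProps in
theorem stmt10 {X : Type*} [NormedAddCommGroup X] [NormedSpace ℂ X] [CompleteSpace X]
    (hinf : ¬ FiniteDimensional ℂ X) (T : X →L[ℂ] X) :
    PropZPa T ↔ PropAb T ∧ leftPoles T = leftPoles0 T :=
  stmt10_general T
end
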